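/- Let Ξ be the linear map on real polynomials in d variables defined on monomials by Ξ(x_1^{k_1}···x_d^{k_d}) = P_{k_1}(x_1)···P_{k_d}(x_d), where P_k(x) = ∏_{j=-(k-1)/2}^{(k-1)/2}(x+j). If ψ ∈ ℝ[x_1,...,x_d] is harmonic (i.e., Δψ = 0 as a polynomial), then Ξ(ψ) is discrete harmonic on ℤ^d, i.e., ∑_{i=1}^d [Ξψ(x+e_i) - 2Ξψ(x) + Ξψ(x-e_i)] = 0 for all x ∈ ℤ^d. -/

import Mathlib

/-!
The polynomials `P k` are central factorial powers: `P (k+1) (x ± 1/2) = P k x * (x ± (k+1)/2)`,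
so the central difference of `P (k+1)` is `(k+1) P k` and the second difference satisfies
`D² P_k = k (k - 1) P_{k-2}`, just as `(x^k)'' = k (k - 1) x^{k-2}`. As `Ξ` acts on each
coordinate of a monomial separately, this gives `D_i² ∘ Ξ = Ξ ∘ ∂_i²`, and summing over `i`
turns `Δψ = 0` into the discrete harmonicity of `Ξψ`.
-/

open MvPolynomial

/-- `P k x = ∏_{j=-(k-1)/2}^{(k-1)/2} (x + j)`. -/
noncomputable def P (k : ℕ) (x : ℝ) : ℝ :=
  ∏ j ∈ Finset.range k, (x + (j : ℝ) - ((k : ℝ) - 1) / 2)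

/-- The evaluation of `Ξ(ψ)` at a point `x`, where `Ξ` is the linear map sending the
monomial `x₁^{k₁} ⋯ x_d^{k_d}` to `P_{k₁}(x₁) ⋯ P_{k_d}(x_d)`. -/
noncomputable def XiEval {d : ℕ} (ψ : MvPolynomial (Fin d) ℝ) (x : Fin d → ℝ) : ℝ :=
  ∑ m ∈ ψ.support, ψ.coeff m * ∏ i, P (m i) (x i)

lemma P_succ_add_half (k : ℕ) (x : ℝ) : P (k + 1) (x + 1 / 2) = P k x * (x + (k + 1) / 2) := by
  rw [P, P, Finset.prod_range_succ]
  congr 1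
  · exact Finset.prod_congr rfl fun j _ => by push_cast; ring
  · push_cast; ring

lemma P_succ_sub_half (k : ℕ) (x : ℝ) : P (k + 1) (x - 1 / 2) = P k x * (x - (k + 1) / 2) := by
  rw [P, P, Finset.prod_range_succ']
  congr 1
  · exact Finset.prod_congr rfl fun j _ => by push_cast; ring
  · push_cast; ring

lemma P_succ_central_diff (k : ℕ) (x : ℝ) :
    P (k + 1) (x + 1 / 2) - P (k + 1) (x - 1 / 2) = (k + 1) * P k x := by
  rw [P_succ_add_half, P_succ_sub_half]
  ring

lemma P_second_diff (k : ℕ) (x : ℝ) :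
    P k (x + 1) - 2 * P k x + P k (x - 1) = k * (k - 1) * P (k - 2) x := by
  match k with
  | 0 => norm_num [P]
  | 1 => simp [P]; ring
  | m + 2 =>
    have right := P_succ_central_diff (m + 1) (x + 1 / 2)
    have left := P_succ_central_diff (m + 1) (x - 1 / 2)
    have inner := P_succ_central_diff m x
    rw [add_assoc x, add_halves, add_sub_cancel_right] at right
    rw [sub_add_cancel, sub_sub, add_halves] at left
    push_cast at right left inner ⊢
    linear_combination right - left + (m + 1 + 1) * inner

lemma XiEval_eq_sum {d : ℕ} (ψ : MvPolynomial (Fin d) ℝ) (x : Fin d → ℝ) :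
    XiEval ψ x = (AddMonoidAlgebra.coeff ψ).sum fun m c => c * ∏ i, P (m i) (x i) := rfl

lemma XiEval_add {d : ℕ} (p q : MvPolynomial (Fin d) ℝ) (x : Fin d → ℝ) :
    XiEval (p + q) x = XiEval p x + XiEval q x := by
  simp only [XiEval_eq_sum, AddMonoidAlgebra.coeff_add]
  exact Finsupp.sum_add_index' (fun _ => zero_mul _) fun _ _ _ => add_mul _ _ _

noncomputable def XiEvalHom {d : ℕ} (x : Fin d → ℝ) : MvPolynomial (Fin d) ℝ →+ ℝ :=
  AddMonoidHom.mk' (XiEval · x) (XiEval_add · · x)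

lemma XiEval_monomial {d : ℕ} (m : Fin d →₀ ℕ) (c : ℝ) (x : Fin d → ℝ) :
    XiEval (monomial m c) x = c * ∏ i, P (m i) (x i) :=
  sum_monomial_eq (b := fun m c => c * ∏ i, P (m i) (x i)) (zero_mul _)

lemma prod_P_eq_mul_prod_erase {ι : Type*} [Fintype ι] [DecidableEq ι] (i : ι)
    {m m' : ι → ℕ} {y y' : ι → ℝ} (h : ∀ j ≠ i, m' j = m j ∧ y' j = y j) :
    ∏ j, P (m' j) (y' j) = P (m' i) (y' i) * ∏ j ∈ Finset.univ.erase i, P (m j) (y j) := by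
  rw [← Finset.mul_prod_erase _ _ (Finset.mem_univ i)]
  congr 1
  refine Finset.prod_congr rfl fun j hj => ?_
  obtain ⟨hm, hy⟩ := h j (Finset.ne_of_mem_erase hj)
  rw [hm, hy]

lemma natCast_mul_natCast_sub_one {R : Type*} [Ring R] (k : ℕ) :
    (k : R) * ((k - 1 : ℕ) : R) = k * (k - 1) := by
  cases k <;> simp

lemma XiEval_second_diff {d : ℕ} (ψ : MvPolynomial (Fin d) ℝ) (i : Fin d) (y : Fin d → ℝ) :
    XiEval ψ (y + Pi.single i 1) - 2 * XiEval ψ y + XiEval ψ (y - Pi.single i 1)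
      = XiEval (pderiv i (pderiv i ψ)) y := by
  induction ψ using MvPolynomial.induction_on' with
  | add p q hp hq =>
    simp only [map_add, XiEval_add, ← hp, ← hq]
    ring
  | monomial m c =>
    simp only [pderiv_monomial, XiEval_monomial]
    have off_i {j} (hj : j ≠ i) : (y + Pi.single i 1 : Fin d → ℝ) j = y j ∧
        (y - Pi.single i 1 : Fin d → ℝ) j = y j ∧
        (m - Finsupp.single i 1 - Finsupp.single i 1 : Fin d →₀ ℕ) j = m j := by
      simp [Ne.symm hj]
    have at_i₁ : (m - Finsupp.single i 1 : Fin d →₀ ℕ) i = m i - 1 := by simp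
    have at_i₂ : (m - Finsupp.single i 1 - Finsupp.single i 1 : Fin d →₀ ℕ) i = m i - 2 := by
      simp only [Finsupp.coe_tsub, Pi.sub_apply, Finsupp.single_eq_same]; omega
    rw [prod_P_eq_mul_prod_erase i (m := m) (y := y) fun j hj => ⟨rfl, (off_i hj).1⟩,
      prod_P_eq_mul_prod_erase i (m := m) (y := y) fun _ _ => ⟨rfl, rfl⟩,
      prod_P_eq_mul_prod_erase i (m := m) (y := y) fun j hj => ⟨rfl, (off_i hj).2.1⟩,
      prod_P_eq_mul_prod_erase i (m := m) (y := y) fun j hj => ⟨(off_i hj).2.2, rfl⟩,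
      at_i₁, at_i₂, mul_assoc c, natCast_mul_natCast_sub_one]
    simp only [Pi.add_apply, Pi.sub_apply, Pi.single_eq_same]
    linear_combination
      (c * ∏ j ∈ Finset.univ.erase i, P (m j) (y j)) * P_second_diff (m i) (y i)

/-- If `ψ` is a harmonic polynomial on `ℝ^d`, then `Ξ(ψ)` is discrete harmonic on `ℤ^d`:
`∑_i [Ξψ(x+eᵢ) - 2 Ξψ(x) + Ξψ(x-eᵢ)] = 0` for all `x ∈ ℤ^d`. -/
theorem stmt2 {d : ℕ} (ψ : MvPolynomial (Fin d) ℝ)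
    (hharm : ∑ i, pderiv i (pderiv i ψ) = 0) (x : Fin d → ℤ) :
    ∑ i, (XiEval ψ (fun j => (x j : ℝ) + if j = i then 1 else 0)
        - 2 * XiEval ψ (fun j => (x j : ℝ))
        + XiEval ψ (fun j => (x j : ℝ) - if j = i then 1 else 0)) = 0 := by
  set y : Fin d → ℝ := fun j => (x j : ℝ)
  have shift (i : Fin d) (s : ℝ → ℝ → ℝ) :
      (fun j => s (y j) (if j = i then 1 else 0))
        = fun j => s (y j) ((Pi.single i 1 : Fin d → ℝ) j) := by
    simp only [Pi.single_apply]
  calc _ = ∑ i, XiEvalHom y (pderiv i (pderiv i ψ)) := by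
        refine Finset.sum_congr rfl fun i _ => ?_
        rw [shift i (· + ·), shift i (· - ·)]
        exact XiEval_second_diff ψ i y
    _ = 0 := by rw [← map_sum, hharm, map_zero]
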